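/- For every finite arity-two signature σ there exists a bound k_σ > 0 such that: for every σ-instance I having no non-leaf edge, there exists a subinstance I' ⊆ I with |I'| < k_σ such that I has a homomorphism to I'. -/

import Mathlib

noncomputable section
open scoped Classical

/-- An instance over an arity-two signature `σ` with domain elements from `V`:
a finite set of facts `R(a,b)`. -/
abbrev Inst (σ V : Type) := Finset (σ × V × V)

namespace PQE

variable {σ V W : Type}

/-- The domain (active domain) of an instance. -/
def domI (I : Inst σ V) : Finset V :=
  I.image (fun f => f.2.1) ∪ I.image (fun f => f.2.2)

/-- `h` is a homomorphism from `I` to `J`. -/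
def IsHom (h : V → W) (I : Inst σ V) (J : Inst σ W) : Prop :=
  ∀ R a b, (R, a, b) ∈ I → (R, h a, h b) ∈ J

/-- `{u,v}` is an (undirected, Gaifman-graph) edge of `I`. -/
def IsEdge (I : Inst σ V) (u v : V) : Prop :=
  u ≠ v ∧ ∃ R, (R, u, v) ∈ I ∨ (R, v, u) ∈ I

/-- `u` is a leaf: it occurs in exactly one undirected edge. -/
def IsLeaf (I : Inst σ V) (u : V) : Prop := ∃! w, IsEdge I u w

/-- `(u,v)` is a non-leaf edge: an edge neither of whose endpoints is a leaf. -/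
def NonLeafEdge (I : Inst σ V) (u v : V) : Prop :=
  IsEdge I u v ∧ ¬ IsLeaf I u ∧ ¬ IsLeaf I v

/-- Rename the elements of a fact along `h`. -/
def rena (h : V → W) : σ × V × V → σ × W × W := fun f => (f.1, h f.2.1, h f.2.2)

/-- Substitution sending `u ↦ x`, `v ↦ y` and any other element `a ↦ emb a`. -/
def sb (u v : V) (x y : W) (emb : V → W) : V → W :=
  fun a => if a = u then x else if a = v then y else emb a

/-- The fact `f` is covered by the edge `{u,v}`: its domain is `⊆ {u,v}`. -/
def Covered (u v : V) (f : σ × V × V) : Prop :=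
  (f.2.1 = u ∨ f.2.1 = v) ∧ (f.2.2 = u ∨ f.2.2 = v)

/-- The fact `f` mentions neither `u` nor `v`. -/
def NotUV (u v : V) (f : σ × V × V) : Prop :=
  f.2.1 ≠ u ∧ f.2.1 ≠ v ∧ f.2.2 ≠ u ∧ f.2.2 ≠ v

/-- `f` is left-incident to the directed edge `(u,v)`: as a `σ↔`-fact it has the form
`R_L(l,u)` with `l ∉ {u,v}`. -/
def LeftInc (u v : V) (f : σ × V × V) : Prop :=
  (f.2.1 = u ∧ f.2.2 ≠ u ∧ f.2.2 ≠ v) ∨ (f.2.2 = u ∧ f.2.1 ≠ u ∧ f.2.1 ≠ v)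

/-- `f` is right-incident to the directed edge `(u,v)`: as a `σ↔`-fact it has the form
`R_R(v,r)` with `r ∉ {u,v}`. -/
def RightInc (u v : V) (f : σ × V × V) : Prop :=
  (f.2.1 = v ∧ f.2.2 ≠ u ∧ f.2.2 ≠ v) ∨ (f.2.2 = v ∧ f.2.1 ≠ u ∧ f.2.1 ≠ v)

/-- Copy the edge `(u,v)` of `I` onto the pair `(x,y)` (all facts covered by `(u,v)`,
renamed by `u ↦ x`, `v ↦ y`, other elements embedded by `emb`). -/
def copyEdge (I : Inst σ V) (u v : V) (x y : W) (emb : V → W) : Inst σ W :=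
  (I.filter (Covered u v)).image (rena (sb u v x y emb))

/-- `(FL, FR)` is an incident pair of the edge `(u,v)` in `I`. -/
def IncidentPair (I : Inst σ V) (u v : V) (FL FR : σ × V × V) : Prop :=
  FL ∈ I ∧ LeftInc u v FL ∧ FR ∈ I ∧ RightInc u v FR

end PQE

open PQE

/-!
Without non-leaf edges every connected component is a star: a center together with leaves
hanging off it (an isolated edge is a star whose center is the smaller endpoint for a fixed
well-order). Type each center by its loops and the set of leaf types realised around it, and each
leaf by the relations linking it to its center together with its loops. Send every center to a
fixed center of the same type and every leaf to a leaf of that fixed center with the same type: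
this is an endomorphism of `I` whose image takes at most as many values as there are types, a
number depending on `σ` only, so its image is the required small subinstance.
-/

namespace PQE

variable {σ V W : Type}

theorem IsEdge.symm {I : Inst σ V} {u v : V} (h : IsEdge I u v) : IsEdge I v u :=
  ⟨h.1.symm, h.2.imp fun _ => Or.symm⟩

theorem IsLeaf.eq_of_isEdge {I : Inst σ V} {u v w : V} (hu : IsLeaf I u)
    (hv : IsEdge I u v) (hw : IsEdge I u w) : v = w :=
  ExistsUnique.unique hu hv hw

theorem isHom_image_rena (h : V → W) (I : Inst σ V) : IsHom h I (I.image (rena h)) :=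
  fun _ _ _ hf => Finset.mem_image_of_mem (rena h) hf

theorem IsHom.image_rena_subset {h : V → W} {I : Inst σ V} {J : Inst σ W} (hh : IsHom h I J) :
    I.image (rena h) ⊆ J := by
  intro f hf
  obtain ⟨⟨R, a, b⟩, hg, rfl⟩ := Finset.mem_image.mp hf
  exact hh R a b hg

theorem card_image_rena_le [Fintype σ] (h : V → W) (I : Inst σ V) :
    (I.image (rena h)).card ≤ Fintype.card σ * ((domI I).image h).card ^ 2 := by
  have hsub : I.image (rena h) ⊆ Finset.univ ×ˢ (domI I).image h ×ˢ (domI I).image h := by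
    intro f hf
    obtain ⟨⟨R, a, b⟩, hg, rfl⟩ := Finset.mem_image.mp hf
    have ha : a ∈ domI I := Finset.mem_union_left _ (Finset.mem_image_of_mem _ hg)
    have hb : b ∈ domI I := Finset.mem_union_right _ (Finset.mem_image_of_mem _ hg)
    simp only [rena, Finset.mem_product, Finset.mem_univ, true_and]
    exact ⟨Finset.mem_image_of_mem h ha, Finset.mem_image_of_mem h hb⟩
  calc (I.image (rena h)).card
      ≤ (Finset.univ ×ˢ (domI I).image h ×ˢ (domI I).image h).card := Finset.card_le_card hsub
    _ = Fintype.card σ * ((domI I).image h).card ^ 2 := by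
      rw [Finset.card_product, Finset.card_product, Finset.card_univ, sq]

section Centers

variable (I : Inst σ V)

def IsCenter (a : V) : Prop :=
  ¬ IsLeaf I a ∨ ∃ w, IsEdge I a w ∧ IsLeaf I w ∧ WellOrderingRel a w

def neighbor (a : V) : V := @Classical.epsilon V ⟨a⟩ (IsEdge I a)

variable {I}

theorem isLeaf_of_not_isCenter {a : V} (ha : ¬ IsCenter I a) : IsLeaf I a :=
  not_not.mp fun h => ha (Or.inl h)

theorem isCenter_iff_of_isLeaf {u v : V} (hu : IsLeaf I u) (huv : IsEdge I u v) :
    IsCenter I u ↔ IsLeaf I v ∧ WellOrderingRel u v := by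
  constructor
  · rintro (h | ⟨w, hw, hwl, hlt⟩)
    · exact absurd hu h
    · obtain rfl := hu.eq_of_isEdge huv hw
      exact ⟨hwl, hlt⟩
  · rintro ⟨hv, hlt⟩
    exact Or.inr ⟨v, huv, hv, hlt⟩

theorem isCenter_iff_not_isCenter (hI : ∀ u v, ¬ NonLeafEdge I u v) {u v : V}
    (h : IsEdge I u v) : IsCenter I u ↔ ¬ IsCenter I v := by
  by_cases hu : IsLeaf I u <;> by_cases hv : IsLeaf I v
  · rw [isCenter_iff_of_isLeaf hu h, isCenter_iff_of_isLeaf hv h.symm]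
    simp only [hu, hv, true_and]
    refine ⟨fun huv hvu => asymm huv hvu, fun hvu => ?_⟩
    rcases trichotomous_of WellOrderingRel u v with huv | rfl | hvu'
    · exact huv
    · exact absurd rfl h.1
    · exact absurd hvu' hvu
  · simp only [isCenter_iff_of_isLeaf hu h, hv, false_and, false_iff, not_not]
    exact Or.inl hv
  · simp only [isCenter_iff_of_isLeaf hv h.symm, hu, false_and, not_false_eq_true, iff_true]
    exact Or.inl hu
  · exact absurd ⟨h, hu, hv⟩ (hI u v)

theorem isEdge_neighbor {a w : V} (h : IsEdge I a w) : IsEdge I a (neighbor I a) :=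
  Classical.epsilon_spec ⟨w, h⟩

theorem IsLeaf.neighbor_eq {a w : V} (ha : IsLeaf I a) (h : IsEdge I a w) : neighbor I a = w :=
  ha.eq_of_isEdge (isEdge_neighbor h) h

theorem isCenter_neighbor (hI : ∀ u v, ¬ NonLeafEdge I u v) {a : V} (ha : ¬ IsCenter I a) :
    IsEdge I a (neighbor I a) ∧ IsCenter I (neighbor I a) := by
  obtain ⟨w, hw, -⟩ := isLeaf_of_not_isCenter ha
  have h := isEdge_neighbor hw
  exact ⟨h, not_not.mp ((isCenter_iff_not_isCenter hI h).not.mp ha)⟩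

end Centers

section Retraction

variable [Fintype σ] (I : Inst σ V)

def arcs (x y : V) : Finset σ := Finset.univ.filter fun R => (R, x, y) ∈ I

abbrev LeafType (σ : Type) : Type := Finset σ × Finset σ × Finset σ

def leafType (c a : V) : LeafType σ := (arcs I c a, arcs I a c, arcs I a a)

abbrev StarType (σ : Type) : Type := Finset σ × Finset (LeafType σ)

/-- Ranging over all of `V` rather than over the neighbours of `c` is harmless: the type only
has to guarantee that every leaf type of `c` is realised at any center of the same type. -/
def starType (c : V) : StarType σ :=
  (arcs I c c, Finset.univ.filter (· ∈ Set.range (leafType I c)))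

abbrev Tag (σ : Type) : Type := StarType σ ⊕ StarType σ × LeafType σ

def tag (a : V) : Tag σ :=
  if IsCenter I a then .inl (starType I a)
  else .inr (starType I (neighbor I a), leafType I (neighbor I a) a)

def centerRep [Nonempty V] (T : StarType σ) : V := Classical.epsilon fun c => starType I c = T

def leafRep [Nonempty V] (c : V) (t : LeafType σ) : V := Classical.epsilon fun a => leafType I c a = t

def tagRep [Nonempty V] : Tag σ → V
  | .inl T => centerRep I T
  | .inr (T, t) => leafRep I (centerRep I T) t

def retraction (a : V) : V := @tagRep σ V _ I ⟨a⟩ (tag I a)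

variable {I}

theorem mem_arcs {x y : V} {R : σ} : R ∈ arcs I x y ↔ (R, x, y) ∈ I := by
  simp [arcs]

theorem retraction_eq_tagRep [Nonempty V] (a : V) : retraction I a = tagRep I (tag I a) := rfl

theorem retraction_of_isCenter [Nonempty V] {c : V} (hc : IsCenter I c) :
    retraction I c = centerRep I (starType I c) := by
  simp only [retraction_eq_tagRep, tag, if_pos hc, tagRep]

theorem retraction_of_isEdge [Nonempty V] {c a : V} (hc : IsCenter I c) (ha : ¬ IsCenter I a)
    (h : IsEdge I c a) : retraction I a = leafRep I (retraction I c) (leafType I c a) := by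
  rw [retraction_of_isCenter hc, retraction_eq_tagRep]
  simp only [tag, if_neg ha, (isLeaf_of_not_isCenter ha).neighbor_eq h.symm, tagRep]

theorem starType_retraction [Nonempty V] {c : V} (hc : IsCenter I c) :
    starType I (retraction I c) = starType I c := by
  rw [retraction_of_isCenter hc]
  exact Classical.epsilon_spec (p := fun c' => starType I c' = starType I c) ⟨c, rfl⟩

theorem leafType_leafRep [Nonempty V] {c c' : V} (h : starType I c' = starType I c) (a : V) :
    leafType I c' (leafRep I c' (leafType I c a)) = leafType I c a := by
  have hmem : leafType I c a ∈ (starType I c').2 := by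
    rw [h]
    simp [starType]
  simp only [starType, Finset.mem_filter, Finset.mem_univ, true_and] at hmem
  exact Classical.epsilon_spec hmem

theorem leafType_retraction [Nonempty V] {c a : V} (hc : IsCenter I c) (ha : ¬ IsCenter I a)
    (h : IsEdge I c a) : leafType I (retraction I c) (retraction I a) = leafType I c a := by
  rw [retraction_of_isEdge hc ha h]
  exact leafType_leafRep (starType_retraction hc) a

theorem arcs_retraction (hI : ∀ u v, ¬ NonLeafEdge I u v) {x y : V} (hxy : x = y ∨ IsEdge I x y) :
    arcs I (retraction I x) (retraction I y) = arcs I x y := by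
  have : Nonempty V := ⟨x⟩
  rcases hxy with rfl | h
  · by_cases hx : IsCenter I x
    · exact congrArg Prod.fst (starType_retraction hx)
    · obtain ⟨hn, hc⟩ := isCenter_neighbor hI hx
      exact congrArg (fun t => t.2.2) (leafType_retraction hc hx hn.symm)
  · by_cases hx : IsCenter I x
    · exact congrArg Prod.fst
        (leafType_retraction hx ((isCenter_iff_not_isCenter hI h).mp hx) h)
    · have hy : IsCenter I y := not_not.mp ((isCenter_iff_not_isCenter hI h).not.mp hx)
      exact congrArg (fun t => t.2.1) (leafType_retraction hy hx h.symm)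

theorem isHom_retraction (hI : ∀ u v, ¬ NonLeafEdge I u v) : IsHom (retraction I) I I := by
  intro R x y hR
  have hxy : x = y ∨ IsEdge I x y := or_iff_not_imp_left.mpr fun hne => ⟨hne, R, Or.inl hR⟩
  rw [← mem_arcs, arcs_retraction hI hxy]
  exact mem_arcs.mpr hR

variable (I) in
theorem card_image_retraction_le (s : Finset V) :
    (s.image (retraction I)).card ≤ Fintype.card (Tag σ) := by
  rcases isEmpty_or_nonempty V with hV | hV
  · simp [Finset.eq_empty_of_isEmpty s]
  calc (s.image (retraction I)).card = ((s.image (tag I)).image (tagRep I)).card := by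
        rw [Finset.image_image]; rfl
    _ ≤ (s.image (tag I)).card := Finset.card_image_le
    _ ≤ Fintype.card (Tag σ) := Finset.card_le_univ _

end Retraction

end PQE

/-- For every finite arity-two signature `σ` there is a bound
`k_σ > 0` such that every instance without non-leaf edges has a homomorphism to one of
its subinstances with fewer than `k_σ` facts. -/
theorem star_instances_small_retract {σ V : Type} [Fintype σ] :
    ∃ k : ℕ, 0 < k ∧
      ∀ I : Inst σ V, (∀ u v, ¬ NonLeafEdge I u v) →
        ∃ I' : Inst σ V, I' ⊆ I ∧ I'.card < k ∧ ∃ h : V → V, IsHom h I I' := by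
  refine ⟨Fintype.card σ * Fintype.card (Tag σ) ^ 2 + 1, Nat.succ_pos _, fun I hI => ?_⟩
  refine ⟨I.image (rena (retraction I)), (isHom_retraction hI).image_rena_subset, ?_,
    retraction I, isHom_image_rena _ _⟩
  calc (I.image (rena (retraction I))).card
      ≤ Fintype.card σ * ((domI I).image (retraction I)).card ^ 2 := card_image_rena_le _ _
    _ ≤ Fintype.card σ * Fintype.card (Tag σ) ^ 2 := by
      gcongr
      exact card_image_retraction_le I _
    _ < Fintype.card σ * Fintype.card (Tag σ) ^ 2 + 1 := Nat.lt_succ_self _
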